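/- Let x₁,…,x_{n_b} ∈ ℝ² with ‖xᵢ‖ ≤ 1, all labels 1, and let w*_b ∈ ℝ² be a critical point of the base objective L_b(w) = (1/n_b)Σᵢ ℓ(-wᵀxᵢ) with ℓ(z) = log(1+e^z). Let sᵢ = √(1-‖xᵢ‖²) and for d > 2 form the dataset in ℝ^d of 2(d-2)n_b points {(xᵢ, ±sᵢe_j) : 1 ≤ i ≤ n_b, 1 ≤ j ≤ d-2}, where e_j ∈ ℝ^{d-2} are coordinate vectors. Then every point of the new dataset has Euclidean norm exactly 1, and w* = (w*_b, 0_{d-2}) is a critical point of the new objective L. -/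

import Mathlib

/-!
Padding `xᵢ` by `±sᵢ eⱼ` only adds coordinates orthogonal to `w* = (w_b, 0)`, so every padded
copy of `xᵢ` has the margin `⟪w_b, xᵢ⟫` of `xᵢ` itself and hence the same logistic weight. In the
gradient of `L` at `w*` the copies with opposite signs cancel in the new coordinates, while in the
old ones the `2m` copies of `xᵢ` reproduce the gradient of `L_b` at `w_b`. The norms are one
because `‖xᵢ‖² + sᵢ² = 1`.
-/

open RealInnerProductSpace Real

section Gradient

variable {E : Type*} [NormedAddCommGroup E] [InnerProductSpace ℝ E] [CompleteSpace E]
  {f : E → ℝ} {f' x : E}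

theorem HasGradientAt.const_mul (c : ℝ) (hf : HasGradientAt f f' x) :
    HasGradientAt (fun y => c * f y) (c • f') x := by
  rw [hasGradientAt_iff_hasFDerivAt, map_smul] at *
  exact hf.const_mul c

theorem HasGradientAt.fun_sum {ι : Type*} {f : ι → E → ℝ} {f' : ι → E} (s : Finset ι)
    (hf : ∀ i ∈ s, HasGradientAt (f i) (f' i) x) :
    HasGradientAt (fun y => ∑ i ∈ s, f i y) (∑ i ∈ s, f' i) x := by
  rw [hasGradientAt_iff_hasFDerivAt, map_sum]
  exact HasFDerivAt.fun_sum fun i hi => hasGradientAt_iff_hasFDerivAt.mp (hf i hi)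

theorem hasDerivAt_log_one_add_exp (z : ℝ) :
    HasDerivAt (fun z => log (1 + exp z)) (sigmoid z) z := by
  have h := ((hasDerivAt_exp z).const_add 1).log (by positivity)
  convert h using 1
  rw [sigmoid_def, exp_neg]
  field_simp
  ring

theorem hasGradientAt_log_one_add_exp_neg_inner (v w : E) :
    HasGradientAt (fun u => log (1 + exp (-⟪u, v⟫))) (-sigmoid (-⟪w, v⟫) • v) w := by
  have hloss : HasDerivAt (fun z => log (1 + exp (-z))) (-sigmoid (-⟪v, w⟫)) ⟪v, w⟫ := by
    simpa [Function.comp_def] using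
      (hasDerivAt_log_one_add_exp (-⟪v, w⟫)).comp _ (hasDerivAt_neg _)
  rw [hasGradientAt_iff_hasFDerivAt, map_smul]
  simpa [Function.comp_def, real_inner_comm v] using
    hloss.comp_hasFDerivAt w (InnerProductSpace.toDual ℝ E v).hasFDerivAt

end Gradient

noncomputable def logisticRisk {ι E : Type*} [Fintype ι] [Inner ℝ E] (v : ι → E) (u : E) : ℝ :=
  (Fintype.card ι : ℝ)⁻¹ * ∑ i, log (1 + exp (-⟪u, v i⟫))

theorem hasGradientAt_logisticRisk {ι E : Type*} [Fintype ι] [NormedAddCommGroup E]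
    [InnerProductSpace ℝ E] [CompleteSpace E] (v : ι → E) (w : E) :
    HasGradientAt (logisticRisk v)
      ((Fintype.card ι : ℝ)⁻¹ • ∑ i, -sigmoid (-⟪w, v i⟫) • v i) w :=
  (HasGradientAt.fun_sum _ fun i _ => hasGradientAt_log_one_add_exp_neg_inner (v i) w).const_mul _

namespace EuclideanSpace

variable {ι κ : Type*}

noncomputable def sumElim (u : EuclideanSpace ℝ ι) (v : EuclideanSpace ℝ κ) :
    EuclideanSpace ℝ (ι ⊕ κ) :=
  WithLp.toLp 2 (Sum.elim u.ofLp v.ofLp)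

@[simp] theorem sumElim_inl (u : EuclideanSpace ℝ ι) (v : EuclideanSpace ℝ κ) (i : ι) :
    sumElim u v (.inl i) = u i := rfl

@[simp] theorem sumElim_inr (u : EuclideanSpace ℝ ι) (v : EuclideanSpace ℝ κ) (k : κ) :
    sumElim u v (.inr k) = v k := rfl

theorem inner_sumElim_sumElim [Fintype ι] [Fintype κ] (u u' : EuclideanSpace ℝ ι)
    (v v' : EuclideanSpace ℝ κ) : ⟪sumElim u v, sumElim u' v'⟫ = ⟪u, u'⟫ + ⟪v, v'⟫ := by
  simp only [PiLp.inner_apply, Fintype.sum_sum_type, sumElim_inl, sumElim_inr]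

theorem norm_sumElim_sq [Fintype ι] [Fintype κ] (u : EuclideanSpace ℝ ι)
    (v : EuclideanSpace ℝ κ) : ‖sumElim u v‖ ^ 2 = ‖u‖ ^ 2 + ‖v‖ ^ 2 := by
  simp only [← real_inner_self_eq_norm_sq, inner_sumElim_sumElim]

theorem sumElim_zero : sumElim (0 : EuclideanSpace ℝ ι) (0 : EuclideanSpace ℝ κ) = 0 := by
  ext (_ | _) <;> rfl

end EuclideanSpace

open EuclideanSpace

section Padding

variable {ι κ τ : Type*} [DecidableEq κ]

noncomputable def padPoint (x : EuclideanSpace ℝ ι) (r : ℝ) (j : κ) (b : Bool) :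
    EuclideanSpace ℝ (ι ⊕ κ) :=
  sumElim x (single j (if b then r else -r))

noncomputable def padData (x : τ → EuclideanSpace ℝ ι) (r : τ → ℝ) (p : τ × κ × Bool) :
    EuclideanSpace ℝ (ι ⊕ κ) :=
  padPoint (x p.1) (r p.1) p.2.1 p.2.2

theorem norm_padPoint_sq [Fintype ι] [Fintype κ] (x : EuclideanSpace ℝ ι) (r : ℝ) (j : κ)
    (b : Bool) : ‖padPoint x r j b‖ ^ 2 = ‖x‖ ^ 2 + r ^ 2 := by
  cases b <;> simp [padPoint, norm_sumElim_sq]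

theorem norm_padPoint_sqrt [Fintype ι] [Fintype κ] {x : EuclideanSpace ℝ ι} (hx : ‖x‖ ≤ 1)
    (j : κ) (b : Bool) : ‖padPoint x √(1 - ‖x‖ ^ 2) j b‖ = 1 := by
  have hr : √(1 - ‖x‖ ^ 2) ^ 2 = 1 - ‖x‖ ^ 2 :=
    sq_sqrt (by nlinarith [norm_nonneg x])
  rw [← pow_eq_one_iff_of_nonneg (norm_nonneg _) two_ne_zero, norm_padPoint_sq, hr,
    add_sub_cancel]

theorem inner_sumElim_zero_padPoint [Fintype ι] [Fintype κ] (w x : EuclideanSpace ℝ ι) (r : ℝ)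
    (j : κ) (b : Bool) : ⟪sumElim w 0, padPoint x r j b⟫ = ⟪w, x⟫ := by
  rw [padPoint, inner_sumElim_sumElim, inner_zero_left, add_zero]

theorem sum_padPoint_bool (x : EuclideanSpace ℝ ι) (r : ℝ) (j : κ) :
    ∑ b, padPoint x r j b = (2 : ℝ) • sumElim x 0 := by
  ext (a | a)
  · simp [padPoint, two_mul]
  · by_cases a = j <;> simp [padPoint, *]

theorem gradient_logisticRisk_padData [Fintype ι] [Fintype κ] [Nonempty κ] [Fintype τ]
    (x : τ → EuclideanSpace ℝ ι) (r : τ → ℝ) (w : EuclideanSpace ℝ ι) :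
    gradient (logisticRisk (padData (κ := κ) x r)) (sumElim w 0) =
      sumElim (gradient (logisticRisk x) w) 0 := by
  rw [(hasGradientAt_logisticRisk x w).gradient, (hasGradientAt_logisticRisk _ _).gradient]
  simp only [padData, inner_sumElim_zero_padPoint, Fintype.sum_prod_type, ← Finset.smul_sum,
    sum_padPoint_bool, Finset.sum_const, Finset.card_univ, Fintype.card_prod]
  ext (a | a)
  · simp [Finset.mul_sum]
    have : (Fintype.card κ : ℝ) ≠ 0 := Nat.cast_ne_zero.mpr Fintype.card_ne_zero
    refine Finset.sum_congr rfl fun i _ => ?_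
    field_simp
  · simp

end Padding

theorem sphere_padding_norm_one_and_critical_point_general
    (nb m : ℕ) (hm : 0 < m)
    (x : Fin nb → EuclideanSpace ℝ (Fin 2)) (hx : ∀ i, ‖x i‖ ≤ 1)
    (Lb : EuclideanSpace ℝ (Fin 2) → ℝ)
    (hLb : ∀ w, Lb w = (1 / (nb : ℝ)) * ∑ i, Real.log (1 + Real.exp (-⟪w, x i⟫)))
    (wb : EuclideanSpace ℝ (Fin 2)) (hcrit : gradient Lb wb = 0)
    (s : Fin nb → ℝ) (hs : ∀ i, s i = Real.sqrt (1 - ‖x i‖ ^ 2))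
    (pad : Fin nb → Fin m → Bool → EuclideanSpace ℝ (Fin 2 ⊕ Fin m))
    (hpad : ∀ i j b, pad i j b = (WithLp.equiv 2 ((k : Fin 2 ⊕ Fin m) → ℝ)).symm
      (Sum.elim (WithLp.equiv 2 ((k : Fin 2) → ℝ) (x i))
        (fun j' => (if b then (1 : ℝ) else -1) * (if j' = j then s i else 0))))
    (L : EuclideanSpace ℝ (Fin 2 ⊕ Fin m) → ℝ)
    (hL : ∀ w, L w = (1 / (2 * (m : ℝ) * nb)) *
      ∑ i, ∑ j, ∑ b, Real.log (1 + Real.exp (-⟪w, pad i j b⟫))) :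
    (∀ i j b, ‖pad i j b‖ = 1) ∧
    gradient L ((WithLp.equiv 2 ((k : Fin 2 ⊕ Fin m) → ℝ)).symm
      (Sum.elim (WithLp.equiv 2 ((k : Fin 2) → ℝ) wb) 0)) = 0 := by
  have : Nonempty (Fin m) := ⟨⟨0, hm⟩⟩
  have hpad' : ∀ i j b, pad i j b = padPoint (x i) (s i) j b := by
    intro i j b
    rw [hpad]
    ext (a | a)
    · rfl
    · by_cases a = j <;> cases b <;> simp [padPoint, *]
  have hLb' : Lb = logisticRisk x := funext fun w => by simp [hLb, logisticRisk]
  have hL' : L = logisticRisk (padData (κ := Fin m) x s) := funext fun w => by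
    simp [hL, logisticRisk, padData, hpad', Fintype.sum_prod_type, mul_comm]
  refine ⟨fun i j b => by rw [hpad', hs]; exact norm_padPoint_sqrt (hx i) j b, ?_⟩
  change gradient L (sumElim wb 0) = 0
  rw [hL', gradient_logisticRisk_padData, ← hLb', hcrit, sumElim_zero]

theorem sphere_padding_norm_one_and_critical_point
    (nb m : ℕ) (hnb : 0 < nb) (hm : 0 < m)
    (x : Fin nb → EuclideanSpace ℝ (Fin 2)) (hx : ∀ i, ‖x i‖ ≤ 1)
    (Lb : EuclideanSpace ℝ (Fin 2) → ℝ)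
    (hLb : ∀ w, Lb w = (1 / (nb : ℝ)) * ∑ i, Real.log (1 + Real.exp (-⟪w, x i⟫)))
    (wb : EuclideanSpace ℝ (Fin 2)) (hcrit : gradient Lb wb = 0)
    (s : Fin nb → ℝ) (hs : ∀ i, s i = Real.sqrt (1 - ‖x i‖ ^ 2))
    (pad : Fin nb → Fin m → Bool → EuclideanSpace ℝ (Fin 2 ⊕ Fin m))
    (hpad : ∀ i j b, pad i j b = (WithLp.equiv 2 ((k : Fin 2 ⊕ Fin m) → ℝ)).symm
      (Sum.elim (WithLp.equiv 2 ((k : Fin 2) → ℝ) (x i))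
        (fun j' => (if b then (1 : ℝ) else -1) * (if j' = j then s i else 0))))
    (L : EuclideanSpace ℝ (Fin 2 ⊕ Fin m) → ℝ)
    (hL : ∀ w, L w = (1 / (2 * (m : ℝ) * nb)) *
      ∑ i, ∑ j, ∑ b, Real.log (1 + Real.exp (-⟪w, pad i j b⟫))) :
    (∀ i j b, ‖pad i j b‖ = 1) ∧
    gradient L ((WithLp.equiv 2 ((k : Fin 2 ⊕ Fin m) → ℝ)).symm
      (Sum.elim (WithLp.equiv 2 ((k : Fin 2) → ℝ) wb) 0)) = 0 :=
  sphere_padding_norm_one_and_critical_point_general nb m hm x hx Lb hLb wb hcrit s hs pad hpad L hL
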